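/- arXiv:1907.08398 — 8 statements merged into one kernel-verified Lean document; each statement's English description precedes it below -/
import Mathlib

section
/- Let a ≠ 0, M ≠ 0 and V = (ρ, u, e, π, û, ψ) ∈ ℝ⁶ with ρ ≠ 0. Then the six vectors r¹ᵘ, r²ᵘ, r³ᵘ, r⁴ᵘ, r⁺, r⁻ form a basis of ℝ⁶; consequently A(V) admits a basis of real eigenvectors, i.e. the explicit subsystem is hyperbolic. -/
/-!
The variables `ρ`, `e`, `û` enter no other equation, so `e₀`, `e₂`, `e₄` are eigenvectors for
`u`; so is `r¹ᵘ`, whose `π`-component cancels the `ψ`-coupling in the velocity equation.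
The acoustic part gives the eigenvalues `u ± a/ρ` with eigenvectors `r^±`. Independence is
back substitution: the `ψ`, `û` and `u` coordinates kill the coefficients of `r¹ᵘ`, `r²ᵘ` and
`r⁺ - r⁻`, the `π` coordinate then that of `r⁺ + r⁻`, leaving two coordinate vectors.
-/

open Matrix

namespace Suliciu

/-- The coefficient matrix with `c = M²π + (1 - M²)ψ` and `β = (1 - M²)/M²`. -/
noncomputable def matrix (a ρ u c β : ℝ) : Matrix (Fin 6) (Fin 6) ℝ :=
  !![u, ρ, 0, 0, 0, 0;
     0, u, 0, 1/ρ, 0, β/ρ;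
     0, c/ρ, u, 0, 0, 0;
     0, a^2/ρ, 0, u, 0, 0;
     0, 0, 0, 0, u, 0;
     0, 0, 0, 0, 0, u]

noncomputable def eigenvectors (a ρ c β : ℝ) : Fin 6 → Fin 6 → ℝ :=
  ![![0, 0, 0, -β, 0, 1],
    ![0, 0, 0, 0, 1, 0],
    ![0, 0, 1, 0, 0, 0],
    ![1, 0, 0, 0, 0, 0],
    ![ρ^2/a^2, 1/a, c/a^2, 1, 0, 0],
    ![ρ^2/a^2, -(1/a), c/a^2, 1, 0, 0]]

noncomputable def eigenvalues (a ρ u : ℝ) : Fin 6 → ℝ :=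
  ![u, u, u, u, u + a/ρ, u - a/ρ]

theorem matrix_mulVec (a ρ u c β : ℝ) (v : Fin 6 → ℝ) :
    matrix a ρ u c β *ᵥ v =
      ![u * v 0 + ρ * v 1, u * v 1 + v 3 / ρ + β / ρ * v 5, c / ρ * v 1 + u * v 2,
        a^2 / ρ * v 1 + u * v 3, u * v 4, u * v 5] := by
  ext i
  fin_cases i <;> simp [matrix, mulVec, dotProduct, Fin.sum_univ_six]
  ring

theorem matrix_mulVec_eigenvectors {a ρ : ℝ} (ha : a ≠ 0) (hρ : ρ ≠ 0) (u c β : ℝ)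
    (i : Fin 6) :
    matrix a ρ u c β *ᵥ eigenvectors a ρ c β i =
      eigenvalues a ρ u i • eigenvectors a ρ c β i := by
  rw [matrix_mulVec]
  fin_cases i <;> ext j <;> fin_cases j <;> simp [eigenvectors, eigenvalues] <;>
    field_simp <;> ring

theorem linearIndependent_eigenvectors {a : ℝ} (ha : a ≠ 0) (ρ c β : ℝ) :
    LinearIndependent ℝ (eigenvectors a ρ c β) := by
  rw [Fintype.linearIndependent_iff]
  intro g hg
  have coord (j : Fin 6) := congrFun hg j
  have h0 := coord 0
  have h1 := coord 1
  have h2 := coord 2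
  have h3 := coord 3
  have h4 := coord 4
  have h5 := coord 5
  simp only [eigenvectors, one_div, Fin.isValue, Finset.sum_apply, Pi.smul_apply, cons_val',
    cons_val_zero, cons_val_fin_one, smul_eq_mul, Fin.sum_univ_six, mul_zero, cons_val_one,
    add_zero, cons_val, mul_one, zero_add, Pi.zero_apply, mul_neg] at h0 h1 h2 h3 h4 h5
  have hg45 : g 4 = g 5 := mul_right_cancel₀ (inv_ne_zero ha) (by linarith)
  rw [h5, zero_mul] at h3
  have hg4 : g 4 = 0 := by linarith
  have hg5 : g 5 = 0 := by linarith
  rw [hg4, hg5] at h0 h2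
  intro i
  fin_cases i <;> simp_all

end Suliciu

open Suliciu in
theorem explicit_subsystem_hyperbolic_general (a M ρ u piv ψ : ℝ)
    (ha : a ≠ 0) (hM : M ≠ 0) (hρ : ρ ≠ 0) :
    let A : Matrix (Fin 6) (Fin 6) ℝ :=
      !![u, ρ, 0, 0, 0, 0;
         0, u, 0, 1/ρ, 0, (1 - M^2)/(M^2*ρ);
         0, (M^2*piv + (1 - M^2)*ψ)/ρ, u, 0, 0, 0;
         0, a^2/ρ, 0, u, 0, 0;
         0, 0, 0, 0, u, 0;
         0, 0, 0, 0, 0, u]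
    let rs : Fin 6 → (Fin 6 → ℝ) :=
      ![![0, 0, 0, 1 - 1/M^2, 0, 1],
        ![0, 0, 0, 0, 1, 0],
        ![0, 0, 1, 0, 0, 0],
        ![1, 0, 0, 0, 0, 0],
        ![ρ^2/a^2, 1/a, (M^2*piv + (1 - M^2)*ψ)/a^2, 1, 0, 0],
        ![ρ^2/a^2, -(1/a), (M^2*piv + (1 - M^2)*ψ)/a^2, 1, 0, 0]]
    LinearIndependent ℝ rs ∧ Submodule.span ℝ (Set.range rs) = ⊤ ∧
      ∀ i : Fin 6, ∃ lam : ℝ, A.mulVec (rs i) = lam • rs i := by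
  intro A rs
  have hA : A = matrix a ρ u (M^2*piv + (1 - M^2)*ψ) ((1 - M^2)/M^2) := by
    simp only [A, matrix, div_div]
  have hrs : rs = eigenvectors a ρ (M^2*piv + (1 - M^2)*ψ) ((1 - M^2)/M^2) := by
    have hβ : 1 - 1/M^2 = -((1 - M^2)/M^2) := by field_simp; ring
    simp only [rs, eigenvectors, hβ]
  rw [hA, hrs]
  have hind := linearIndependent_eigenvectors ha ρ (M^2*piv + (1 - M^2)*ψ) ((1 - M^2)/M^2)
  exact ⟨hind, hind.span_eq_top_of_card_eq_finrank (by simp),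
    fun i => ⟨_, matrix_mulVec_eigenvectors ha hρ u _ _ i⟩⟩

/-- The six vectors `r¹ᵘ, r²ᵘ, r³ᵘ, r⁴ᵘ, r⁺, r⁻` form a basis of `ℝ⁶`
(they are linearly independent and span); consequently the matrix `A(V)` of the
explicit Suliciu-type relaxation subsystem admits a basis of real eigenvectors,
i.e. the explicit subsystem is hyperbolic. -/
theorem explicit_subsystem_hyperbolic (a M ρ u e piv uh ψ : ℝ)
    (ha : a ≠ 0) (hM : M ≠ 0) (hρ : ρ ≠ 0) :
    let A : Matrix (Fin 6) (Fin 6) ℝ :=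
      !![u, ρ, 0, 0, 0, 0;
         0, u, 0, 1/ρ, 0, (1 - M^2)/(M^2*ρ);
         0, (M^2*piv + (1 - M^2)*ψ)/ρ, u, 0, 0, 0;
         0, a^2/ρ, 0, u, 0, 0;
         0, 0, 0, 0, u, 0;
         0, 0, 0, 0, 0, u]
    let rs : Fin 6 → (Fin 6 → ℝ) :=
      ![![0, 0, 0, 1 - 1/M^2, 0, 1],
        ![0, 0, 0, 0, 1, 0],
        ![0, 0, 1, 0, 0, 0],
        ![1, 0, 0, 0, 0, 0],
        ![ρ^2/a^2, 1/a, (M^2*piv + (1 - M^2)*ψ)/a^2, 1, 0, 0],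
        ![ρ^2/a^2, -(1/a), (M^2*piv + (1 - M^2)*ψ)/a^2, 1, 0, 0]]
    LinearIndependent ℝ rs ∧ Submodule.span ℝ (Set.range rs) = ⊤ ∧
      ∀ i : Fin 6, ∃ lam : ℝ, A.mulVec (rs i) = lam • rs i :=
  explicit_subsystem_hyperbolic_general a M ρ u piv ψ ha hM hρ
end

section
/- Let a ≠ 0, M ≠ 0 and V = (ρ, u, e, π, û, ψ) ∈ ℝ⁶ with ρ ≠ 0. Then the characteristic polynomial of the 6×6 matrix A(V) equals (X − u)⁴ · (X − (u + a/ρ)) · (X − (u − a/ρ)). In particular A(V) has the eigenvalue u with algebraic multiplicity 4 and the simple eigenvalues u ± a/ρ. -/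
open Polynomial Matrix

private lemma cv2 {α : Type*} (x0 x1 x2 x3 x4 x5 : α) : ![x0,x1,x2,x3,x4,x5] 2 = x2 := rfl
private lemma cv3 {α : Type*} (x0 x1 x2 x3 x4 x5 : α) : ![x0,x1,x2,x3,x4,x5] 3 = x3 := rfl
private lemma cv4 {α : Type*} (x0 x1 x2 x3 x4 x5 : α) : ![x0,x1,x2,x3,x4,x5] 4 = x4 := rfl
private lemma cv5 {α : Type*} (x0 x1 x2 x3 x4 x5 : α) : ![x0,x1,x2,x3,x4,x5] 5 = x5 := rfl

private lemma dv2 {α : Type*} (x0 x1 x2 x3 x4 : α) : ![x0,x1,x2,x3,x4] 2 = x2 := rfl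
private lemma dv3 {α : Type*} (x0 x1 x2 x3 x4 : α) : ![x0,x1,x2,x3,x4] 3 = x3 := rfl

private lemma cf1 {α : Type*} (x : α) (f : Fin 5 → α) : vecCons x f 1 = f 0 := rfl
private lemma cf2 {α : Type*} (x : α) (f : Fin 5 → α) : vecCons x f 2 = f 1 := rfl
private lemma cf3 {α : Type*} (x : α) (f : Fin 5 → α) : vecCons x f 3 = f 2 := rfl
private lemma cf4 {α : Type*} (x : α) (f : Fin 5 → α) : vecCons x f 4 = f 3 := rfl
private lemma cf5 {α : Type*} (x : α) (f : Fin 5 → α) : vecCons x f 5 = f 4 := rfl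

set_option maxHeartbeats 4000000 in
set_option maxRecDepth 40000 in
/-- The characteristic polynomial of the coefficient matrix `A(V)` of the explicit
Suliciu-type relaxation subsystem equals `(X − u)⁴ (X − (u + a/ρ)) (X − (u − a/ρ))`;
in particular `u` is an eigenvalue of algebraic multiplicity `4` and `u ± a/ρ` are
simple eigenvalues. -/
theorem explicit_subsystem_charpoly (a M ρ u e piv uh ψ : ℝ)
    (ha : a ≠ 0) (hM : M ≠ 0) (hρ : ρ ≠ 0) :
    let A : Matrix (Fin 6) (Fin 6) ℝ :=
      !![u, ρ, 0, 0, 0, 0;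
         0, u, 0, 1/ρ, 0, (1 - M^2)/(M^2*ρ);
         0, (M^2*piv + (1 - M^2)*ψ)/ρ, u, 0, 0, 0;
         0, a^2/ρ, 0, u, 0, 0;
         0, 0, 0, 0, u, 0;
         0, 0, 0, 0, 0, u]
    A.charpoly = (X - C u)^4 * (X - C (u + a/ρ)) * (X - C (u - a/ρ)) ∧
      A.charpoly.rootMultiplicity u = 4 ∧
      A.charpoly.rootMultiplicity (u + a/ρ) = 1 ∧
      A.charpoly.rootMultiplicity (u - a/ρ) = 1 := by
  intro A
  have haρ : a / ρ ≠ 0 := div_ne_zero ha hρ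
  have hfac : A.charpoly = (X - C u)^4 * (X - C (u + a/ρ)) * (X - C (u - a/ρ)) := by
    have hch : charmatrix A =
        !![X - C u, -C ρ, 0, 0, 0, 0;
           0, X - C u, 0, -C (1/ρ), 0, -C ((1 - M^2)/(M^2*ρ));
           0, -C ((M^2*piv + (1 - M^2)*ψ)/ρ), X - C u, 0, 0, 0;
           0, -C (a^2/ρ), 0, X - C u, 0, 0;
           0, 0, 0, 0, X - C u, 0;
           0, 0, 0, 0, 0, X - C u] := by
      apply Matrix.ext
      intro i j
      fin_cases i <;> fin_cases j <;>
        simp [A, charmatrix_apply_eq, charmatrix_apply_ne, cv2, cv3, cv4, cv5,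
          Matrix.vecHead, Matrix.vecTail, cf1, cf2, cf3, cf4, cf5]
    rw [Matrix.charpoly, hch]
    have hdet : Matrix.det !![X - C u, -C ρ, 0, 0, 0, 0;
           0, X - C u, 0, -C (1/ρ), 0, -C ((1 - M^2)/(M^2*ρ));
           0, -C ((M^2*piv + (1 - M^2)*ψ)/ρ), X - C u, 0, 0, 0;
           0, -C (a^2/ρ), 0, X - C u, 0, 0;
           0, 0, 0, 0, X - C u, 0;
           0, 0, 0, 0, 0, X - C u] =
        (X - C u)^4 * ((X - C u)^2 - C (a^2/ρ) * C (1/ρ)) := by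
      simp [Matrix.det_succ_row_zero, Fin.sum_univ_succ, Fin.succAbove, dv2, dv3,
        show Fin.castSucc (2 : Fin 4) = (2 : Fin 5) from rfl,
        show Fin.castSucc (Fin.succ (2 : Fin 4)) = (3 : Fin 6) from rfl]
      ring
    rw [hdet]
    have h1 : C (a^2/ρ) * C (1/ρ) = C (a/ρ) * C (a/ρ) := by
      rw [← C_mul, ← C_mul]
      congr 1
      field_simp
    rw [h1, C_add, C_sub]
    ring
  have hne1 : u ≠ u + a / ρ := by intro h; apply haρ; linarith
  have hne2 : u ≠ u - a / ρ := by intro h; apply haρ; linarith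
  have hne3 : u + a / ρ ≠ u - a / ρ := by intro h; apply haρ; linarith
  have h40 : ((X - C u) ^ 4 : ℝ[X]) ≠ 0 := pow_ne_zero _ (X_sub_C_ne_zero u)
  have hb0 : (X - C (u + a / ρ) : ℝ[X]) ≠ 0 := X_sub_C_ne_zero _
  have hc0 : (X - C (u - a / ρ) : ℝ[X]) ≠ 0 := X_sub_C_ne_zero _
  have hrm : ∀ t : ℝ, A.charpoly.rootMultiplicity t =
      ((X - C u) ^ 4 : ℝ[X]).rootMultiplicity t +
      ((X - C (u + a / ρ) : ℝ[X]).rootMultiplicity t +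
        (X - C (u - a / ρ) : ℝ[X]).rootMultiplicity t) := by
    intro t
    rw [hfac, Polynomial.rootMultiplicity_mul (mul_ne_zero (mul_ne_zero h40 hb0) hc0),
      Polynomial.rootMultiplicity_mul (mul_ne_zero h40 hb0), add_assoc]
  have hpow : ∀ t : ℝ, t ≠ u → ((X - C u) ^ 4 : ℝ[X]).rootMultiplicity t = 0 := by
    intro t ht
    refine Polynomial.rootMultiplicity_eq_zero ?_
    simp [Polynomial.IsRoot, sub_eq_zero, ht]
  refine ⟨hfac, ?_, ?_, ?_⟩
  · rw [hrm, Polynomial.rootMultiplicity_X_sub_C_pow,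
      Polynomial.rootMultiplicity_X_sub_C, Polynomial.rootMultiplicity_X_sub_C,
      if_neg hne1, if_neg hne2]
  · rw [hrm, hpow _ hne1.symm, Polynomial.rootMultiplicity_X_sub_C,
      Polynomial.rootMultiplicity_X_sub_C, if_pos rfl, if_neg hne3]
  · rw [hrm, hpow _ hne2.symm, Polynomial.rootMultiplicity_X_sub_C,
      Polynomial.rootMultiplicity_X_sub_C, if_neg hne3.symm, if_pos rfl]
end

section
/- Let a ≠ 0, M ≠ 0 and V = (ρ, u, e, π, û, ψ) ∈ ℝ⁶ with ρ ≠ 0. Consider the eigenvalue fields λ⁺, λ⁻ : ℝ⁶ → ℝ defined on states with nonzero first component by λ±(ρ, u, e, π, û, ψ) = u ± a/ρ, and λᵘ(ρ, u, e, π, û, ψ) = u. Then λ⁺, λ⁻ are differentiable at V and their Fréchet derivatives at V applied to the corresponding eigenvectors vanish: Dλ⁺(V)[r⁺] = 0, Dλ⁻(V)[r⁻] = 0, and Dλᵘ(V)[rᵢᵘ] = 0 for i = 1, 2, 3, 4; i.e. all eigenvalue fields are linearly degenerate. -/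
set_option maxHeartbeats 1000000


/-- The eigenvalue fields `λ⁺, λ⁻, λᵘ` of the explicit Suliciu-type relaxation
subsystem are differentiable at a state `V` with `ρ ≠ 0`, and their Fréchet
derivatives applied to the corresponding eigenvectors vanish: all eigenvalue
fields are linearly degenerate. -/
theorem eigenvalue_fields_linearly_degenerate (a M ρ u e piv uh ψ : ℝ)
    (ha : a ≠ 0) (hM : M ≠ 0) (hρ : ρ ≠ 0) :
    let V : Fin 6 → ℝ := ![ρ, u, e, piv, uh, ψ]
    let lamp : (Fin 6 → ℝ) → ℝ := fun W => W 1 + a / W 0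
    let lamm : (Fin 6 → ℝ) → ℝ := fun W => W 1 - a / W 0
    let lamu : (Fin 6 → ℝ) → ℝ := fun W => W 1
    let rp : Fin 6 → ℝ := ![ρ^2/a^2, 1/a, (M^2*piv + (1 - M^2)*ψ)/a^2, 1, 0, 0]
    let rm : Fin 6 → ℝ := ![ρ^2/a^2, -(1/a), (M^2*piv + (1 - M^2)*ψ)/a^2, 1, 0, 0]
    let r1 : Fin 6 → ℝ := ![0, 0, 0, 1 - 1/M^2, 0, 1]
    let r2 : Fin 6 → ℝ := ![0, 0, 0, 0, 1, 0]
    let r3 : Fin 6 → ℝ := ![0, 0, 1, 0, 0, 0]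
    let r4 : Fin 6 → ℝ := ![1, 0, 0, 0, 0, 0]
    DifferentiableAt ℝ lamp V ∧ DifferentiableAt ℝ lamm V ∧ DifferentiableAt ℝ lamu V ∧
      fderiv ℝ lamp V rp = 0 ∧ fderiv ℝ lamm V rm = 0 ∧
      fderiv ℝ lamu V r1 = 0 ∧ fderiv ℝ lamu V r2 = 0 ∧
      fderiv ℝ lamu V r3 = 0 ∧ fderiv ℝ lamu V r4 = 0 := by
  intro V lamp lamm lamu rp rm r1 r2 r3 r4
  have hV0 : V 0 ≠ 0 := hρ
  have hp0 : HasFDerivAt (fun W : Fin 6 → ℝ => W 0)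
      (ContinuousLinearMap.proj (R := ℝ) (φ := fun _ : Fin 6 => ℝ) 0) V :=
    (ContinuousLinearMap.proj (R := ℝ) (φ := fun _ : Fin 6 => ℝ) 0).hasFDerivAt
  have hp1 : HasFDerivAt (fun W : Fin 6 → ℝ => W 1)
      (ContinuousLinearMap.proj (R := ℝ) (φ := fun _ : Fin 6 => ℝ) 1) V :=
    (ContinuousLinearMap.proj (R := ℝ) (φ := fun _ : Fin 6 => ℝ) 1).hasFDerivAt
  have hinv : HasFDerivAt (fun W : Fin 6 → ℝ => (W 0)⁻¹)
      ((-ContinuousLinearMap.mulLeftRight ℝ ℝ (V 0)⁻¹ (V 0)⁻¹).comp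
        (ContinuousLinearMap.proj 0)) V :=
    (hasFDerivAt_inv' hV0).comp V hp0
  have hdiv : HasFDerivAt (fun W : Fin 6 → ℝ => a / W 0)
      (a • ((-ContinuousLinearMap.mulLeftRight ℝ ℝ (V 0)⁻¹ (V 0)⁻¹).comp
        (ContinuousLinearMap.proj 0))) V := by
    simp only [div_eq_mul_inv]
    exact hinv.const_mul a
  have hlamp : HasFDerivAt lamp _ V := hp1.add hdiv
  have hlamm : HasFDerivAt lamm _ V := hp1.sub hdiv
  have hVe : V 0 = ρ := rfl
  refine ⟨hlamp.differentiableAt, hlamm.differentiableAt, hp1.differentiableAt, ?_, ?_, ?_, ?_, ?_, ?_⟩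
  · rw [hlamp.fderiv]
    simp [rp, hVe, ContinuousLinearMap.proj_apply, ContinuousLinearMap.mulLeftRight_apply]
    field_simp
    ring
  · rw [hlamm.fderiv]
    simp [rm, hVe, ContinuousLinearMap.proj_apply, ContinuousLinearMap.mulLeftRight_apply]
    field_simp
    ring
  all_goals rw [hp1.fderiv]; simp [r1, r2, r3, r4, ContinuousLinearMap.proj_apply]
end

section
/- Let a ≠ 0, M ≠ 0 and V = (ρ, u, e, π, û, ψ) ∈ ℝ⁶ with ρ ≠ 0. Define I₁±(V) = u ± a/ρ, I₂±(V) = π ∓ a·u, I₃±(V) = e − (M²/(2a²))π² − ((1−M²)/a²)πψ, I₄±(V) = û and I₅±(V) = ψ. Then the Fréchet derivatives of I₁⁺, I₂⁺, I₃⁺, I₄⁺, I₅⁺ at V applied to r⁺ vanish, and the Fréchet derivatives of I₁⁻, I₂⁻, I₃⁻, I₄⁻, I₅⁻ at V applied to r⁻ vanish; i.e. these functions are Riemann invariants of the eigenvalues λ± = u ± a/ρ. -/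
private def pr (i : Fin 6) : (Fin 6 → ℝ) →L[ℝ] ℝ := ContinuousLinearMap.proj i

@[simp] private lemma pr_apply (i : Fin 6) (W : Fin 6 → ℝ) : pr i W = W i := rfl

private lemma hasFDerivAt_pr (i : Fin 6) (V : Fin 6 → ℝ) :
    HasFDerivAt (fun W : Fin 6 → ℝ => W i) (pr i) V :=
  (pr i).hasFDerivAt

/-- The functions `I₁± = u ± a/ρ`, `I₂± = π ∓ au`, `I₃± = e − (M²/(2a²))π² − ((1−M²)/a²)πψ`,
`I₄± = û`, `I₅± = ψ` are Riemann invariants of the eigenvalues `λ± = u ± a/ρ`: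
their Fréchet derivatives at `V` applied to the eigenvectors `r±` vanish. -/
theorem riemann_invariants_acoustic (a M ρ u e piv uh ψ : ℝ)
    (ha : a ≠ 0) (hM : M ≠ 0) (hρ : ρ ≠ 0) :
    let V : Fin 6 → ℝ := ![ρ, u, e, piv, uh, ψ]
    let I1p : (Fin 6 → ℝ) → ℝ := fun W => W 1 + a / W 0
    let I1m : (Fin 6 → ℝ) → ℝ := fun W => W 1 - a / W 0
    let I2p : (Fin 6 → ℝ) → ℝ := fun W => W 3 - a * W 1
    let I2m : (Fin 6 → ℝ) → ℝ := fun W => W 3 + a * W 1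
    let I3 : (Fin 6 → ℝ) → ℝ := fun W =>
      W 2 - M^2/(2*a^2) * (W 3)^2 - (1 - M^2)/a^2 * (W 3) * (W 5)
    let I4 : (Fin 6 → ℝ) → ℝ := fun W => W 4
    let I5 : (Fin 6 → ℝ) → ℝ := fun W => W 5
    let rp : Fin 6 → ℝ := ![ρ^2/a^2, 1/a, (M^2*piv + (1 - M^2)*ψ)/a^2, 1, 0, 0]
    let rm : Fin 6 → ℝ := ![ρ^2/a^2, -(1/a), (M^2*piv + (1 - M^2)*ψ)/a^2, 1, 0, 0]
    (fderiv ℝ I1p V rp = 0 ∧ fderiv ℝ I2p V rp = 0 ∧ fderiv ℝ I3 V rp = 0 ∧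
      fderiv ℝ I4 V rp = 0 ∧ fderiv ℝ I5 V rp = 0) ∧
    (fderiv ℝ I1m V rm = 0 ∧ fderiv ℝ I2m V rm = 0 ∧ fderiv ℝ I3 V rm = 0 ∧
      fderiv ℝ I4 V rm = 0 ∧ fderiv ℝ I5 V rm = 0) := by
  intro V I1p I1m I2p I2m I3 I4 I5 rp rm
  have hp : ∀ i : Fin 6, HasFDerivAt (fun W : Fin 6 → ℝ => W i) (pr i) V :=
    fun i => hasFDerivAt_pr i V
  have hV0 : V 0 ≠ 0 := hρ
  have hinv : HasFDerivAt (fun W : Fin 6 → ℝ => (W 0)⁻¹) (-(V 0 ^ 2)⁻¹ • pr 0) V := by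
    have h := (hasFDerivAt_inv hV0).comp V (hp 0)
    exact h.congr_fderiv (by ext W; simp [mul_comm])
  have hI1p : fderiv ℝ I1p V = pr 1 + a • (-(V 0 ^ 2)⁻¹ • pr 0) := by
    have h : HasFDerivAt I1p (pr 1 + a • (-(V 0 ^ 2)⁻¹ • pr 0)) V := by
      have := (hp 1).add (hinv.const_mul a)
      simp only [I1p, div_eq_mul_inv]; exact this
    exact h.fderiv
  have hI1m : fderiv ℝ I1m V = pr 1 - a • (-(V 0 ^ 2)⁻¹ • pr 0) := by
    have h : HasFDerivAt I1m (pr 1 - a • (-(V 0 ^ 2)⁻¹ • pr 0)) V := by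
      have := (hp 1).sub (hinv.const_mul a)
      simp only [I1m, div_eq_mul_inv]; exact this
    exact h.fderiv
  have hI2p : fderiv ℝ I2p V = pr 3 - a • pr 1 := by
    have h : HasFDerivAt I2p (pr 3 - a • pr 1) V := (hp 3).sub ((hp 1).const_mul a)
    exact h.fderiv
  have hI2m : fderiv ℝ I2m V = pr 3 + a • pr 1 := by
    have h : HasFDerivAt I2m (pr 3 + a • pr 1) V := (hp 3).add ((hp 1).const_mul a)
    exact h.fderiv
  have hI3 : fderiv ℝ I3 V =
      pr 2 - (M^2/(2*a^2)) • ((2 * V 3) • pr 3)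
        - ((1 - M^2)/a^2) • (V 3 • pr 5 + V 5 • pr 3) := by
    have hsq : HasFDerivAt (fun W : Fin 6 → ℝ => (W 3)^2) ((2 * V 3) • pr 3) V := by
      have := (hp 3).mul (hp 3)
      have e1 : (fun W : Fin 6 → ℝ => (W 3)^2) = fun W => W 3 * W 3 := by funext W; ring
      rw [e1]
      exact this.congr_fderiv (by rw [two_mul, add_smul])
    have hmul : HasFDerivAt (fun W : Fin 6 → ℝ => W 3 * W 5)
        (V 3 • pr 5 + V 5 • pr 3) V := (hp 3).mul (hp 5)
    have h : HasFDerivAt I3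
        (pr 2 - (M^2/(2*a^2)) • ((2 * V 3) • pr 3)
          - ((1 - M^2)/a^2) • (V 3 • pr 5 + V 5 • pr 3)) V := by
      have := ((hp 2).sub (hsq.const_mul (M^2/(2*a^2)))).sub
        (hmul.const_mul ((1 - M^2)/a^2))
      simp only [I3, mul_assoc]; exact this
    exact h.fderiv
  have hI4 : fderiv ℝ I4 V = pr 4 := (hp 4).fderiv
  have hI5 : fderiv ℝ I5 V = pr 5 := (hp 5).fderiv
  have hV3 : V 3 = piv := rfl
  have hV5 : V 5 = ψ := rfl
  have hVr0 : V 0 = ρ := rfl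
  have ep0 : rp 0 = ρ^2/a^2 := rfl
  have ep1 : rp 1 = 1/a := rfl
  have ep2 : rp 2 = (M^2*piv + (1 - M^2)*ψ)/a^2 := rfl
  have ep3 : rp 3 = 1 := rfl
  have ep4 : rp 4 = 0 := rfl
  have ep5 : rp 5 = 0 := rfl
  have em0 : rm 0 = ρ^2/a^2 := rfl
  have em1 : rm 1 = -(1/a) := rfl
  have em2 : rm 2 = (M^2*piv + (1 - M^2)*ψ)/a^2 := rfl
  have em3 : rm 3 = 1 := rfl
  have em4 : rm 4 = 0 := rfl
  have em5 : rm 5 = 0 := rfl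
  refine ⟨⟨?_, ?_, ?_, ?_, ?_⟩, ⟨?_, ?_, ?_, ?_, ?_⟩⟩ <;>
    simp only [hI1p, hI1m, hI2p, hI2m, hI3, hI4, hI5, hV3, hV5, hVr0,
      ContinuousLinearMap.add_apply, ContinuousLinearMap.sub_apply,
      ContinuousLinearMap.smul_apply, pr_apply, smul_eq_mul,
      ep0, ep1, ep2, ep3, ep4, ep5, em0, em1, em2, em3, em4, em5] <;>
    field_simp <;> ring
end

section
/- Let a ≠ 0, M ≠ 0, and let τ_L > 0, u_L, u_R, π_L, π_R, ψ_L, ψ_R ∈ ℝ be such that τ_L* ≠ 0, where u*, π_L*, τ_L* are given by the intermediate-state formulas. Set ρ_L = 1/τ_L, ρ_L* = 1/τ_L* and σ = u_L − a·τ_L (the left wave speed). Then the Rankine–Hugoniot conditions hold across the left wave for the mass, momentum and relaxation-pressure equations: (i) ρ_L*·u* − ρ_L·u_L = σ·(ρ_L* − ρ_L); (ii) (ρ_L*·(u*)² + π_L* + ((1−M²)/M²)·ψ_L) − (ρ_L·u_L² + π_L + ((1−M²)/M²)·ψ_L) = σ·(ρ_L*·u* − ρ_L·u_L); (iii) (ρ_L*·π_L*·u*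 + a²·u*) − (ρ_L·π_L·u_L + a²·u_L) = σ·(ρ_L*·π_L* − ρ_L·π_L). -/
/-- The Rankine–Hugoniot conditions hold across the left wave (of speed
`σ = u_L − aτ_L`) for the mass, momentum and relaxation-pressure equations of the
explicit Suliciu-type relaxation subsystem. -/
theorem left_wave_rankine_hugoniot
    (a M tauL uL uR piL piR ψL ψR uS piLs tauLs ρL ρLs σ : ℝ)
    (ha : a ≠ 0) (hM : M ≠ 0) (htauL : 0 < tauL)
    (huS : uS = (uL + uR)/2 + 1/(2*a)*((piL - piR) + (1 - M^2)/M^2*(ψL - ψR)))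
    (hpiLs : piLs = (piL + piR)/2 + a/2*(uL - uR) - (1 - M^2)/(2*M^2)*(ψL - ψR))
    (htauLs : tauLs = tauL + (uS - uL)/a)
    (hne : tauLs ≠ 0)
    (hρL : ρL = 1/tauL) (hρLs : ρLs = 1/tauLs)
    (hσ : σ = uL - a * tauL) :
    (ρLs * uS - ρL * uL = σ * (ρLs - ρL)) ∧
    ((ρLs * uS^2 + piLs + (1 - M^2)/M^2 * ψL) -
        (ρL * uL^2 + piL + (1 - M^2)/M^2 * ψL) = σ * (ρLs * uS - ρL * uL)) ∧
    ((ρLs * piLs * uS + a^2 * uS) - (ρL * piL * uL + a^2 * uL) =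
        σ * (ρLs * piLs - ρL * piL)) := by
  have hM2 : M^2 ≠ 0 := pow_ne_zero 2 hM
  have htL : tauL ≠ 0 := ne_of_gt htauL
  have hp : piLs = piL + a * (uL - uS) := by
    rw [hpiLs, huS]; field_simp; ring
  have ht : tauL + (uS - uL)/a = (a*tauL + (uS - uL))/a := by
    field_simp
  have hne2 : a * tauL + (uS - uL) ≠ 0 := by
    intro h
    apply hne
    rw [htauLs, ht, h, zero_div]
  subst hρL hρLs hσ htauLs hp
  refine ⟨?_, ?_, ?_⟩ <;> rw [ht] <;> field_simp [hne2] <;> ring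
end

section
/- Let a ≠ 0, M ≠ 0, and let τ_L > 0, e_L, u_L, u_R, π_L, π_R, ψ_L, ψ_R ∈ ℝ be such that τ_L* ≠ 0, where u*, π_L*, τ_L* are given by the intermediate-state formulas. Set ρ_L = 1/τ_L, ρ_L* = 1/τ_L*, σ = u_L − a·τ_L, define the intermediate internal energy by continuity of the Riemann invariant I₃⁻, namely e_L* = e_L − (M²/(2a²))·(π_L² − (π_L*)²) − ((1−M²)/a²)·(π_L − π_L*)·ψ_L, and define the total energies E_L = ρ_L·(e_L + (M²/2)·u_L²) and E_L* = ρ_L*·(e_L* + (M²/2)·(u*)²). Then the Rankine–Hugoniot condition holds across the left wave for the energy equation: u*·(E_L* + M²·π_L* + (1−M²)·ψ_L) − u_L·(E_L + M²·π_L + (1−M²)·ψ_L) = σ·(E_L* − E_L). -/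
/-!
Across the left wave `σ = u_L - aτ_L` the mass flux `ρ (u - σ)` equals `a` on both sides, so the
energy jump condition reduces to `a [e + M²u²/2] + [u (M²π + (1-M²)ψ)] = 0`. The intermediate
pressure satisfies `π_L* = π_L - a (u* - u_L)` (continuity of `π + a u`), and with this the jump of
`e` prescribed by the invariant `I₃⁻` makes that expression vanish identically.
-/

theorem intermediate_pressure_eq_sub_mul {a M uL uR piL piR ψL ψR uS piLs : ℝ} (ha : a ≠ 0)
    (huS : uS = (uL + uR)/2 + 1/(2*a)*((piL - piR) + (1 - M^2)/M^2*(ψL - ψR)))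
    (hpiLs : piLs = (piL + piR)/2 + a/2*(uL - uR) - (1 - M^2)/(2*M^2)*(ψL - ψR)) :
    piLs = piL - a * (uS - uL) := by
  rw [huS, hpiLs]
  field_simp
  ring

theorem intermediate_velocity_sub_wave_speed {a tauL uL uS tauLs : ℝ} (ha : a ≠ 0)
    (htauLs : tauLs = tauL + (uS - uL)/a) :
    uS - (uL - a * tauL) = a * tauLs := by
  rw [htauLs]
  field_simp
  ring

theorem mass_flux_eq {a τ u σ : ℝ} (hτ : τ ≠ 0) (hu : u - σ = a * τ) : 1/τ * (u - σ) = a := by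
  rw [hu]
  field_simp

theorem energy_flux_jump_eq_of_mass_flux {m σ ρ₁ ρ₂ u₁ u₂ h₁ h₂ Q₁ Q₂ : ℝ}
    (hm₁ : ρ₁ * (u₁ - σ) = m) (hm₂ : ρ₂ * (u₂ - σ) = m) :
    u₂ * (ρ₂ * h₂ + Q₂) - u₁ * (ρ₁ * h₁ + Q₁) - σ * (ρ₂ * h₂ - ρ₁ * h₁) =
      m * (h₂ - h₁) + (u₂ * Q₂ - u₁ * Q₁) := by
  linear_combination h₂ * hm₂ - h₁ * hm₁

theorem energy_jump_of_riemann_invariant {a M eL uL piL ψL uS piLs eLs : ℝ} (ha : a ≠ 0)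
    (hpi : piLs = piL - a * (uS - uL))
    (heLs : eLs = eL - M^2/(2*a^2) * (piL^2 - piLs^2) - (1 - M^2)/a^2 * (piL - piLs) * ψL) :
    a * ((eLs + M^2/2 * uS^2) - (eL + M^2/2 * uL^2)) +
      (uS * (M^2 * piLs + (1 - M^2) * ψL) - uL * (M^2 * piL + (1 - M^2) * ψL)) = 0 := by
  subst heLs hpi
  field_simp
  ring

theorem left_wave_energy_rankine_hugoniot_general
    (a M tauL eL uL uR piL piR ψL ψR uS piLs tauLs ρL ρLs σ eLs EL ELs : ℝ)
    (ha : a ≠ 0) (htauL : 0 < tauL)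
    (huS : uS = (uL + uR)/2 + 1/(2*a)*((piL - piR) + (1 - M^2)/M^2*(ψL - ψR)))
    (hpiLs : piLs = (piL + piR)/2 + a/2*(uL - uR) - (1 - M^2)/(2*M^2)*(ψL - ψR))
    (htauLs : tauLs = tauL + (uS - uL)/a)
    (hne : tauLs ≠ 0)
    (hρL : ρL = 1/tauL) (hρLs : ρLs = 1/tauLs)
    (hσ : σ = uL - a * tauL)
    (heLs : eLs = eL - M^2/(2*a^2) * (piL^2 - piLs^2) -
      (1 - M^2)/a^2 * (piL - piLs) * ψL)
    (hEL : EL = ρL * (eL + M^2/2 * uL^2))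
    (hELs : ELs = ρLs * (eLs + M^2/2 * uS^2)) :
    uS * (ELs + M^2 * piLs + (1 - M^2) * ψL) -
        uL * (EL + M^2 * piL + (1 - M^2) * ψL) = σ * (ELs - EL) := by
  have hmL : ρL * (uL - σ) = a := by
    rw [hρL, hσ]
    exact mass_flux_eq htauL.ne' (by ring)
  have hmLs : ρLs * (uS - σ) = a := by
    rw [hρLs, hσ]
    exact mass_flux_eq hne (intermediate_velocity_sub_wave_speed ha htauLs)
  have hpi := intermediate_pressure_eq_sub_mul ha huS hpiLs
  have hflux := energy_flux_jump_eq_of_mass_flux (h₁ := eL + M^2/2 * uL^2)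
    (h₂ := eLs + M^2/2 * uS^2) (Q₁ := M^2 * piL + (1 - M^2) * ψL)
    (Q₂ := M^2 * piLs + (1 - M^2) * ψL) hmL hmLs
  rw [hEL, hELs]
  linear_combination hflux + energy_jump_of_riemann_invariant ha hpi heLs

/-- The Rankine–Hugoniot condition holds across the left wave (of speed
`σ = u_L − aτ_L`) for the energy equation of the explicit Suliciu-type relaxation
subsystem, where the intermediate internal energy is defined by continuity of the
Riemann invariant `I₃⁻`. -/
theorem left_wave_energy_rankine_hugoniot
    (a M tauL eL uL uR piL piR ψL ψR uS piLs tauLs ρL ρLs σ eLs EL ELs : ℝ)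
    (ha : a ≠ 0) (hM : M ≠ 0) (htauL : 0 < tauL)
    (huS : uS = (uL + uR)/2 + 1/(2*a)*((piL - piR) + (1 - M^2)/M^2*(ψL - ψR)))
    (hpiLs : piLs = (piL + piR)/2 + a/2*(uL - uR) - (1 - M^2)/(2*M^2)*(ψL - ψR))
    (htauLs : tauLs = tauL + (uS - uL)/a)
    (hne : tauLs ≠ 0)
    (hρL : ρL = 1/tauL) (hρLs : ρLs = 1/tauLs)
    (hσ : σ = uL - a * tauL)
    (heLs : eLs = eL - M^2/(2*a^2) * (piL^2 - piLs^2) -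
      (1 - M^2)/a^2 * (piL - piLs) * ψL)
    (hEL : EL = ρL * (eL + M^2/2 * uL^2))
    (hELs : ELs = ρLs * (eLs + M^2/2 * uS^2)) :
    uS * (ELs + M^2 * piLs + (1 - M^2) * ψL) -
        uL * (EL + M^2 * piL + (1 - M^2) * ψL) = σ * (ELs - EL) :=
  left_wave_energy_rankine_hugoniot_general a M tauL eL uL uR piL piR ψL ψR uS piLs tauLs ρL ρLs σ
    eLs EL ELs ha htauL huS hpiLs htauLs hne hρL hρLs hσ heLs hEL hELs
end

section
/- For all B > 0 and C > 0 there exists a₀ > 0 such that for every Mach number M ∈ (0, 1], every relaxation parameter a ≥ a₀, and all data satisfying 1/B ≤ τ_L ≤ B, 1/B ≤ τ_R ≤ B, |u_L| ≤ B, |u_R| ≤ B, |π_L| ≤ B, |π_R| ≤ B, |ψ_L| ≤ B, |ψ_R| ≤ B and |ψ_L − ψ_R| ≤ C·M² (well-prepared fast pressure), the intermediate specific volumes are positive: τ_L* > 0 and τ_R* > 0. In particular the intermediate densities ρ_L* = 1/τ_L* and ρ_R* = 1/τ_R* of the approximate Riemann solver are positive for a relaxation parameter large enough but independent of M. -/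
/-- For bounded data with well-prepared fast pressure (`|ψ_L − ψ_R| ≤ CM²`), there is a
relaxation parameter threshold `a₀ > 0`, independent of the Mach number `M ∈ (0,1]`,
such that for every `a ≥ a₀` the intermediate specific volumes of the approximate
Riemann solver are positive; in particular the intermediate densities are positive. -/
theorem intermediate_densities_positive :
    ∀ B C : ℝ, 0 < B → 0 < C → ∃ a₀ : ℝ, 0 < a₀ ∧
      ∀ M a tauL tauR uL uR piL piR ψL ψR : ℝ,
        0 < M → M ≤ 1 → a₀ ≤ a →
        1/B ≤ tauL → tauL ≤ B → 1/B ≤ tauR → tauR ≤ B →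
        |uL| ≤ B → |uR| ≤ B → |piL| ≤ B → |piR| ≤ B → |ψL| ≤ B → |ψR| ≤ B →
        |ψL - ψR| ≤ C * M^2 →
        ∀ uS tauLs tauRs : ℝ,
          uS = (uL + uR)/2 + 1/(2*a)*((piL - piR) + (1 - M^2)/M^2*(ψL - ψR)) →
          tauLs = tauL + (uS - uL)/a →
          tauRs = tauR + (uR - uS)/a →
          0 < tauLs ∧ 0 < tauRs ∧ 0 < 1/tauLs ∧ 0 < 1/tauRs := by
  intro B C hB hC
  refine ⟨1 + B * (2 * B + C), by positivity, ?_⟩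
  intro M a tauL tauR uL uR piL piR ψL ψR hM hM1 ha hτL1 hτL2 hτR1 hτR2 huL huR
    hpiL hpiR hψL hψR hψ uS tauLs tauRs huS hL hR
  have hM2 : (0:ℝ) < M^2 := by positivity
  have ha1 : (1:ℝ) ≤ a := le_trans (by nlinarith) ha
  have ha0 : (0:ℝ) < a := lt_of_lt_of_le (by norm_num) ha1
  -- bound the fast-pressure term
  have hψ' := abs_le.mp hψ
  have hk : |(1 - M^2)/M^2 * (ψL - ψR)| ≤ C := by
    rw [abs_mul, abs_div]
    have h1 : |1 - M^2| = 1 - M^2 := abs_of_nonneg (by nlinarith)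
    have h2 : |M^2| = M^2 := abs_of_nonneg (le_of_lt hM2)
    rw [h1, h2, div_mul_eq_mul_div, div_le_iff₀ hM2]
    nlinarith [abs_nonneg (ψL - ψR), hψ, hM2]
  have hk' := abs_le.mp hk
  have huL' := abs_le.mp huL
  have huR' := abs_le.mp huR
  have hpiL' := abs_le.mp hpiL
  have hpiR' := abs_le.mp hpiR
  -- bound on uS - uL and uR - uS
  have hbound : |uS - (uL + uR)/2| ≤ B + C/2 := by
    have : uS - (uL + uR)/2 = 1/(2*a)*((piL - piR) + (1 - M^2)/M^2*(ψL - ψR)) := by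
      rw [huS]; ring
    rw [this, abs_mul]
    have h1 : |1/(2*a)| = 1/(2*a) := abs_of_pos (by positivity)
    have h2 : |(piL - piR) + (1 - M^2)/M^2*(ψL - ψR)| ≤ 2*B + C := by
      calc |(piL - piR) + (1 - M^2)/M^2*(ψL - ψR)|
          ≤ |piL - piR| + |(1 - M^2)/M^2*(ψL - ψR)| := abs_add_le _ _
        _ ≤ 2*B + C := by
            have := abs_sub_abs_le_abs_sub piL piR
            have hd : |piL - piR| ≤ 2*B := by
              have := abs_sub piL piR
              calc |piL - piR| ≤ |piL| + |piR| := abs_sub _ _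
                _ ≤ 2*B := by linarith
            linarith
    rw [h1]
    have h3 : 1/(2*a) ≤ 1/2 := by
      apply div_le_div_of_nonneg_left (by norm_num) (by norm_num) (by linarith)
    calc 1/(2*a) * |(piL - piR) + (1 - M^2)/M^2*(ψL - ψR)|
        ≤ 1/2 * (2*B + C) := by
          apply mul_le_mul h3 h2 (abs_nonneg _) (by norm_num)
      _ = B + C/2 := by ring
  have hbound' := abs_le.mp hbound
  
  have hL' : 0 < tauLs := by
    rw [hL]
    have h1 : uS - uL ≥ -(2*B + C) := by
      have : uS - uL = (uS - (uL + uR)/2) + (uR - uL)/2 := by ring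
      linarith
    have h2 : a * tauL ≥ a / B := by
      have h := mul_le_mul_of_nonneg_left hτL1 ha0.le
      calc a / B = a * (1/B) := by ring
        _ ≤ a * tauL := h
    have h4 : 2*B + C < a/B := by
      rw [lt_div_iff₀ hB]; linarith [ha]
    have h3 : 0 < a * tauL + (uS - uL) := by linarith
    have : tauL + (uS - uL)/a = (a * tauL + (uS - uL))/a := by field_simp
    rw [this]
    positivity
  have hR' : 0 < tauRs := by
    rw [hR]
    have h1 : uR - uS ≥ -(2*B + C) := by
      have : uR - uS = -(uS - (uL + uR)/2) + (uR - uL)/2 := by ring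
      linarith
    have h2 : a * tauR ≥ a / B := by
      have h := mul_le_mul_of_nonneg_left hτR1 ha0.le
      calc a / B = a * (1/B) := by ring
        _ ≤ a * tauR := h
    have h4 : 2*B + C < a/B := by
      rw [lt_div_iff₀ hB]; linarith [ha]
    have h3 : 0 < a * tauR + (uR - uS) := by linarith
    have : tauR + (uR - uS)/a = (a * tauR + (uR - uS))/a := by field_simp
    rw [this]
    positivity
  exact ⟨hL', hR', by positivity, by positivity⟩
end

section
/- For all B > 0 and C > 0 there exists a₀ > 0 such that for every Mach number M ∈ (0, 1], every relaxation parameter a ≥ a₀, and all data satisfying e_L ≥ 1/B, e_R ≥ 1/B, |u_L| ≤ B, |u_R| ≤ B, |π_L| ≤ B, |π_R| ≤ B, |ψ_L| ≤ B, |ψ_R| ≤ B and |ψ_L − ψ_R| ≤ C·M² (well-prepared fast pressure), the intermediate internal energies of the approximate Riemann solver are positive: e_L* > 0 and e_R* > 0, where e_L* = e_L − (1/(2a²))·[(π_L² − (π_L*)²) + (1−M²)·(π_L − π_L*)·ψ_L] and e_R* = e_R − (1/(2a²))·[(π_R² − (π_R*)²) + (1−M²)·(π_R − π_R*)·ψ_R].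 Thus positivity of the internal energy holds for a relaxation parameter large enough but independent of M. -/
set_option maxHeartbeats 1000000

/-- Key one-sided positivity lemma. -/
lemma key_pos (B C M a e p ps ψ : ℝ) (hB : 0 < B) (hC : 0 < C)
    (hM2le' : M^2 ≤ 1) (ha : 3 + 3*B^3 + 3*C*B^2 ≤ a)
    (he : 1/B ≤ e) (hp : |p| ≤ B) (hψ : |ψ| ≤ B)
    (hd : |p - ps| ≤ B + a*B + C/2) :
    0 < e - 1/(2*a^2) * ((p^2 - ps^2) + (1 - M^2)*(p - ps)*ψ) := by
  have ha3 : (3:ℝ) ≤ a := by linarith [pow_pos hB 3, mul_pos hC (pow_pos hB 2)]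
  have ha0 : (0:ℝ) < a := by linarith
  obtain ⟨hp1, hp2⟩ := abs_le.mp hp
  obtain ⟨hψ1, hψ2⟩ := abs_le.mp hψ
  obtain ⟨hd1, hd2⟩ := abs_le.mp hd
  have hD : (0:ℝ) ≤ B + a*B + C/2 := by positivity
  have he' : 1 ≤ e * B := (div_le_iff₀ hB).mp he
  have step1 : (p^2 - ps^2) + (1 - M^2)*(p - ps)*ψ ≤ 3*B*(B + a*B + C/2) := by
    nlinarith [sq_nonneg (p - ps),
      mul_nonneg (sub_nonneg.mpr hp2) (sub_nonneg.mpr hd2),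
      mul_nonneg (sub_nonneg.mpr (neg_le.mp (neg_le_of_neg_le hp1))) (sub_nonneg.mpr (neg_le.mp (neg_le_of_neg_le hd1))),
      mul_nonneg (sub_nonneg.mpr hp2) (sub_nonneg.mpr (neg_le.mp (neg_le_of_neg_le hd1))),
      mul_nonneg (sub_nonneg.mpr (neg_le.mp (neg_le_of_neg_le hp1))) (sub_nonneg.mpr hd2),
      mul_nonneg (sub_nonneg.mpr hψ2) (sub_nonneg.mpr hd2),
      mul_nonneg (sub_nonneg.mpr (neg_le.mp (neg_le_of_neg_le hψ1))) (sub_nonneg.mpr (neg_le.mp (neg_le_of_neg_le hd1))),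
      mul_nonneg (sub_nonneg.mpr hψ2) (sub_nonneg.mpr (neg_le.mp (neg_le_of_neg_le hd1))),
      mul_nonneg (sub_nonneg.mpr (neg_le.mp (neg_le_of_neg_le hψ1))) (sub_nonneg.mpr hd2),
      sub_nonneg.mpr hM2le']
  have step2 : 3*B*(B + a*B + C/2) < e * (2*a^2) := by
    have h1 : 3*B^2*(B + a*B + C/2) < 2*a^2 := by
      nlinarith [mul_nonneg (sub_nonneg.mpr ha3) (pow_pos hB 3).le,
        mul_nonneg (sub_nonneg.mpr ha3) (mul_pos hC (pow_pos hB 2)).le,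
        mul_pos ha0 ha0, sq_nonneg (a - 3),
        mul_le_mul_of_nonneg_left ha ha0.le]
    nlinarith [mul_le_mul_of_nonneg_left he' (by positivity : (0:ℝ) ≤ 2*a^2),
      mul_nonneg hB.le (mul_nonneg hB.le hD)]
  have h2a : (0:ℝ) < 2*a^2 := by positivity
  have : 1/(2*a^2) * ((p^2 - ps^2) + (1 - M^2)*(p - ps)*ψ) < e := by
    rw [one_div_mul_eq_div, div_lt_iff₀ h2a]
    linarith
  linarith

/-- For bounded data with well-prepared fast pressure (`|ψ_L − ψ_R| ≤ CM²`), there is a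
relaxation parameter threshold `a₀ > 0`, independent of the Mach number `M ∈ (0,1]`,
such that for every `a ≥ a₀` the intermediate internal energies of the approximate
Riemann solver are positive. -/
theorem intermediate_internal_energies_positive :
    ∀ B C : ℝ, 0 < B → 0 < C → ∃ a₀ : ℝ, 0 < a₀ ∧
      ∀ M a eL eR uL uR piL piR ψL ψR : ℝ,
        0 < M → M ≤ 1 → a₀ ≤ a →
        1/B ≤ eL → 1/B ≤ eR →
        |uL| ≤ B → |uR| ≤ B → |piL| ≤ B → |piR| ≤ B → |ψL| ≤ B → |ψR| ≤ B →
        |ψL - ψR| ≤ C * M^2 →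
        ∀ piLs piRs eLs eRs : ℝ,
          piLs = (piL + piR)/2 + a/2*(uL - uR) - (1 - M^2)/(2*M^2)*(ψL - ψR) →
          piRs = (piL + piR)/2 + a/2*(uL - uR) + (1 - M^2)/(2*M^2)*(ψL - ψR) →
          eLs = eL - 1/(2*a^2) * ((piL^2 - piLs^2) + (1 - M^2)*(piL - piLs)*ψL) →
          eRs = eR - 1/(2*a^2) * ((piR^2 - piRs^2) + (1 - M^2)*(piR - piRs)*ψR) →
          0 < eLs ∧ 0 < eRs := by
  intro B C hB hC
  refine ⟨3 + 3*B^3 + 3*C*B^2, by positivity, ?_⟩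
  intro M a eL eR uL uR piL piR ψL ψR hM hM1 ha heL heR huL huR hpiL hpiR hψL hψR hψd
  intro piLs piRs eLs eRs hpiLs hpiRs heLs heRs
  have ha3 : (3:ℝ) ≤ a := by linarith [pow_pos hB 3, mul_pos hC (pow_pos hB 2)]
  have ha0 : (0:ℝ) < a := by linarith
  have hM2 : (0:ℝ) < M^2 := by positivity
  have hM2le : M^2 ≤ 1 := by nlinarith
  -- bound on the ψ-difference term
  have ht : |(1 - M^2)/(2*M^2)*(ψL - ψR)| ≤ C/2 := by
    rw [abs_mul, abs_div]
    rw [abs_of_nonneg (by linarith : (0:ℝ) ≤ 1 - M^2), abs_of_pos (by linarith : (0:ℝ) < 2*M^2)]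
    rw [div_mul_eq_mul_div, div_le_iff₀ (by linarith : (0:ℝ) < 2*M^2)]
    nlinarith [mul_nonneg hM2.le (abs_nonneg (ψL - ψR)), hψd]
  obtain ⟨ht1, ht2⟩ := abs_le.mp ht
  obtain ⟨hpiL1, hpiL2⟩ := abs_le.mp hpiL
  obtain ⟨hpiR1, hpiR2⟩ := abs_le.mp hpiR
  obtain ⟨huL1, huL2⟩ := abs_le.mp huL
  obtain ⟨huR1, huR2⟩ := abs_le.mp huR
  have hu1 : a*(uL - uR) ≤ a*(2*B) := mul_le_mul_of_nonneg_left (by linarith) ha0.le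
  have hu2 : a*(-(2*B)) ≤ a*(uL - uR) := mul_le_mul_of_nonneg_left (by linarith) ha0.le
  have hu1' : a*(uL - uR) ≤ 2*(a*B) := by nlinarith
  have hu2' : -(2*(a*B)) ≤ a*(uL - uR) := by nlinarith
  have hdL : |piL - piLs| ≤ B + a*B + C/2 := by
    rw [hpiLs, abs_le]
    constructor <;> [linarith [hu2']; linarith [hu1']]
  have hdR : |piR - piRs| ≤ B + a*B + C/2 := by
    rw [hpiRs, abs_le]
    constructor <;> [linarith [hu1']; linarith [hu2']]
  constructor
  · rw [heLs]
    exact key_pos B C M a eL piL piLs ψL hB hC hM2le ha heL hpiL hψL hdL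
  · rw [heRs]
    exact key_pos B C M a eR piR piRs ψR hB hC hM2le ha heR hpiR hψR hdR
end
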